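/- arXiv:2305.18198 — 3 statements merged into one kernel-verified Lean document; each statement's English description precedes it below -/
import Mathlib

section
/- In any finite path in the race-detecting state graph of a barrier-free program, every block of the block decomposition other than the last is complete (i.e., the block's thread is not normal at the block's final node). -/
namespace MC

/-- Statements of a thread: acquire/release a lock, barrier exit, or an nsync statement. -/
inductive Stmt (Lock NStmt : Type) where
  | acquire : Lock → Stmt Lock NStmt
  | release : Lock → Stmt Lock NStmt
  | exit : Stmt Lock NStmt
  | nsync : NStmt → Stmt Lock NStmt

/-- The kind of a local state: acquire state (with its lock), release state,
barrier state, nsync state, or terminal state. -/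
inductive LKind (Lock : Type) where
  | acquire : Lock → LKind Lock
  | release : Lock → LKind Lock
  | barrier : LKind Lock
  | nsync : LKind Lock
  | term : LKind Lock

def LKind.isBarrier {L : Type} : LKind L → Bool
  | .barrier => true
  | _ => false

def LKind.isTerm {L : Type} : LKind L → Bool
  | .term => true
  | _ => false

/-- A multithreaded program with thread ID set `Fin n`. -/
structure Program where
  n : ℕ
  npos : 0 < n
  Lock : Type
  Shared : Type
  Local : Fin n → Type
  NStmt : Fin n → Type
  kind : ∀ i, Local i → LKind Lock
  next : ∀ i, Local i → Local i
  stmts : ∀ i, Local i → Set (NStmt i)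
  stmtsNonempty : ∀ i σ, kind i σ = .nsync → (stmts i σ).Nonempty
  update : ∀ i, Local i → NStmt i → Shared → Local i × Shared

variable {P : Program}

/-- Global statements: a thread ID together with one of its statements. -/
abbrev GStmt (P : Program) := Σ i : Fin P.n, Stmt P.Lock (P.NStmt i)

def GStmt.isNsync (t : GStmt P) : Prop := ∃ m, t.2 = Stmt.nsync m
def GStmt.isExit (t : GStmt P) : Prop := t.2 = Stmt.exit
def GStmt.isExitZero (t : GStmt P) : Prop := t.2 = Stmt.exit ∧ (t.1 : ℕ) = 0
def GStmt.isReleaseOn (t : GStmt P) (l : P.Lock) : Prop := t.2 = Stmt.release l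
def GStmt.isAcquireOn (t : GStmt P) (l : P.Lock) : Prop := t.2 = Stmt.acquire l

/-- A global state: local state of each thread, shared state, lock state
(`none` = free), and barrier wait set. -/
structure GState (P : Program) where
  loc : ∀ i, P.Local i
  sh : P.Shared
  lk : P.Lock → Option (Fin P.n)
  wait : Set (Fin P.n)

/-- Enabledness of a statement at a global state. -/
def Enabled (s : GState P) : GStmt P → Prop
  | ⟨i, st⟩ =>
    match P.kind i (s.loc i), st with
    | .acquire l, .acquire l' => l = l' ∧ s.lk l = none
    | .release l, .release l' => l = l' ∧ s.lk l = some i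
    | .barrier, .exit => i ∉ s.wait
    | .nsync, .nsync m => m ∈ P.stmts i (s.loc i)
    | _, _ => False

open Classical in
/-- Execution of a statement at a global state. -/
noncomputable def execute (s : GState P) : GStmt P → GState P
  | ⟨i, st⟩ =>
    let r : P.Local i × P.Shared × (P.Lock → Option (Fin P.n)) :=
      match st with
      | .acquire l => (P.next i (s.loc i), s.sh, fun l' => if l' = l then some i else s.lk l')
      | .release l => (P.next i (s.loc i), s.sh, fun l' => if l' = l then none else s.lk l')
      | .exit => (P.next i (s.loc i), s.sh, s.lk)
      | .nsync m => ((P.update i (s.loc i) m s.sh).1, (P.update i (s.loc i) m s.sh).2, s.lk)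
    { loc := Function.update s.loc i r.1
      sh := r.2.1
      lk := r.2.2
      wait :=
        if (P.kind i r.1).isBarrier then
          (if s.wait ∪ {i} = Set.univ then (∅ : Set (Fin P.n)) else s.wait ∪ {i})
        else s.wait }

/-- Finite executions: `Exec s ts sf` means the statement sequence `ts` is
step-by-step enabled starting from `s` and leads to `sf`. -/
inductive Exec : GState P → List (GStmt P) → GState P → Prop
  | nil (s : GState P) : Exec s [] s
  | cons {s s' sf : GState P} {t : GStmt P} {l : List (GStmt P)} :
      Enabled s t → execute s t = s' → Exec s' l sf → Exec s (t :: l) sf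

/-- The program has no barrier local states. -/
def NoBarriers (P : Program) : Prop := ∀ i σ, P.kind i σ ≠ LKind.barrier

/-! ### Traces, events, happens-before, data races -/

/-- The thread ID of the event at position `k` of a trace (if any). -/
def tidAt (ts : List (GStmt P)) (k : ℕ) : Option (Fin P.n) := (ts[k]?).map (·.1)

/-- The statement at position `k` satisfies `p`. -/
def stmtIs (ts : List (GStmt P)) (k : ℕ) (p : GStmt P → Prop) : Prop :=
  ∃ t, ts[k]? = some t ∧ p t

/-- Intra-thread order on trace positions. -/
def IntraThread (ts : List (GStmt P)) (j k : ℕ) : Prop :=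
  j < k ∧ k < ts.length ∧ tidAt ts j = tidAt ts k

/-- Release-acquire relation on trace positions: a release of `l` is related to
the next subsequent acquire of `l`. -/
def RelAcq (ts : List (GStmt P)) (j k : ℕ) : Prop :=
  ∃ l : P.Lock, j < k ∧ stmtIs ts j (·.isReleaseOn l) ∧ stmtIs ts k (·.isAcquireOn l) ∧
    ∀ m, j < m → m < k → ¬ stmtIs ts m (·.isAcquireOn l)

/-- The barrier epoch of the event at position `k`: the number of barrier-exit
events of the same thread at positions `≤ k`. -/
noncomputable def epoch (ts : List (GStmt P)) (k : ℕ) : ℕ :=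
  Set.ncard {m : ℕ | m ≤ k ∧ tidAt ts m = tidAt ts k ∧ stmtIs ts m (·.isExit)}

/-- Barrier relation on trace positions: earlier epochs happen before later ones. -/
def BarrierRel (ts : List (GStmt P)) (j k : ℕ) : Prop :=
  j < ts.length ∧ k < ts.length ∧ epoch ts j < epoch ts k

/-- The happens-before relation on trace positions. -/
def HB (ts : List (GStmt P)) : ℕ → ℕ → Prop :=
  Relation.TransGen (fun j k => IntraThread ts j k ∨ RelAcq ts j k ∨ BarrierRel ts j k)

/-- `C` is a conflict relation for `P`: symmetric, relating only nsync statements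
from different threads, and non-conflicting nsync statements from different
threads commute whenever both are enabled. -/
structure IsConflictRel (P : Program) (C : GStmt P → GStmt P → Prop) : Prop where
  symm : ∀ t1 t2, C t1 t2 → C t2 t1
  nsync_left : ∀ t1 t2, C t1 t2 → t1.isNsync
  nsync_right : ∀ t1 t2, C t1 t2 → t2.isNsync
  diff : ∀ t1 t2, C t1 t2 → t1.1 ≠ t2.1
  commute : ∀ t1 t2, t1.isNsync → t2.isNsync → t1.1 ≠ t2.1 → ¬ C t1 t2 →
    ∀ s : GState P, Enabled s t1 → Enabled s t2 →
      execute (execute s t1) t2 = execute (execute s t2) t1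

/-- The events at positions `j` and `k` race: their statements conflict and the
positions are unordered by happens-before. -/
def Races (C : GStmt P → GStmt P → Prop) (ts : List (GStmt P)) (j k : ℕ) : Prop :=
  (∃ t1 t2, ts[j]? = some t1 ∧ ts[k]? = some t2 ∧ C t1 t2) ∧ ¬ HB ts j k ∧ ¬ HB ts k j

/-- The trace contains a data race. -/
def HasRace (C : GStmt P → GStmt P → Prop) (ts : List (GStmt P)) : Prop :=
  ∃ j k, Races C ts j k

/-- The event (statement with per-thread occurrence number) at position `k`. -/
def eventAt (ts : List (GStmt P)) (k : ℕ) : Option (GStmt P × ℕ) :=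
  (ts[k]?).map (fun t => (t, (ts.take (k+1)).countP (fun t' => decide (t'.1 = t.1))))

/-- The set of events of a trace. -/
def events (ts : List (GStmt P)) : Set (GStmt P × ℕ) :=
  {e | ∃ k, eventAt ts k = some e}

/-! ### The race-detecting state graph -/

/-- The edge relation of the local graph of thread `i`. -/
def isLocalStep (i : Fin P.n) (σ σ' : P.Local i) : Prop :=
  match P.kind i σ with
  | .nsync => ∃ m ζ, m ∈ P.stmts i σ ∧ (P.update i σ m ζ).1 = σ'
  | .term => False
  | _ => σ' = P.next i σ

/-- Choice of sets `R i` containing all acquire and release local states and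
meeting every cycle of the local graph of thread `i`. -/
structure RSets (P : Program) where
  R : ∀ i, Set (P.Local i)
  acq_mem : ∀ i σ l, P.kind i σ = LKind.acquire l → σ ∈ R i
  rel_mem : ∀ i σ l, P.kind i σ = LKind.release l → σ ∈ R i
  acyclic : ∀ i σ, σ ∉ R i →
    ¬ Relation.TransGen (fun a b => a ∉ R i ∧ b ∉ R i ∧ isLocalStep i a b) σ σ

/-- Thread `i` is normal at state `s`: its local state is not in `R i` and it
has an enabled statement. -/
def Normal (RS : RSets P) (s : GState P) (i : Fin P.n) : Prop :=
  s.loc i ∉ RS.R i ∧ ∃ st : Stmt P.Lock (P.NStmt i), Enabled s ⟨i, st⟩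

/-- A node of the race-detecting state graph: a state together with, for each
thread, the set of nsync statements recorded since its last synchronization. -/
structure RNode (P : Program) where
  st : GState P
  hist : ∀ i, Set (P.NStmt i)

/-- Edge relation of the race-detecting state graph. -/
def REdge (RS : RSets P) (u : RNode P) (t : GStmt P) (v : RNode P) : Prop :=
  Enabled u.st t ∧ v.st = execute u.st t ∧
  (∀ m, t.2 = Stmt.nsync m → v.hist t.1 = insert m (u.hist t.1)) ∧
  (¬ t.isNsync →
    ((t.isExitZero ∨ u.st.loc t.1 ∈ RS.R t.1) → v.hist t.1 = ∅) ∧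
    (¬ (t.isExitZero ∨ u.st.loc t.1 ∈ RS.R t.1) → v.hist t.1 = u.hist t.1)) ∧
  (∀ i, i ≠ t.1 →
    (t.isExitZero → v.hist i = ∅) ∧ (¬ t.isExitZero → v.hist i = u.hist i)) ∧
  ((∃ i, Normal RS u.st i) → Normal RS u.st t.1 ∧ ∀ j, Normal RS u.st j → t.1 ≤ j)

/-- Paths in the race-detecting state graph. -/
inductive RPath (RS : RSets P) : RNode P → List (GStmt P) → RNode P → Prop
  | nil (u : RNode P) : RPath RS u [] u
  | cons {u v w : RNode P} {t : GStmt P} {l : List (GStmt P)} :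
      REdge RS u t v → RPath RS v l w → RPath RS u (t :: l) w

/-- Reachability in the race-detecting state graph. -/
def RReach (RS : RSets P) (u v : RNode P) : Prop := ∃ l, RPath RS u l v

/-- Thread `i` detects a race at node `u`. -/
def ThreadDetects (C : GStmt P → GStmt P → Prop) (u : RNode P) (i : Fin P.n) : Prop :=
  ∃ j, j ≠ i ∧ ∃ m1 ∈ u.hist i, ∃ m2 ∈ u.hist j,
    C ⟨i, Stmt.nsync m1⟩ ⟨j, Stmt.nsync m2⟩

/-- The edge `(u,t,v)` detects a race: the moving thread arrives at an `R i`,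
barrier, or terminal local state and detects a race at the target node. -/
def EdgeDetects (RS : RSets P) (C : GStmt P → GStmt P → Prop)
    (u : RNode P) (t : GStmt P) (v : RNode P) : Prop :=
  REdge RS u t v ∧
  (v.st.loc t.1 ∈ RS.R t.1 ∨ (P.kind t.1 (v.st.loc t.1)).isBarrier = true ∨
    (P.kind t.1 (v.st.loc t.1)).isTerm = true) ∧
  ThreadDetects C v t.1

/-- The race-detecting state graph detects a race from `u0`. -/
def DetectsFrom (RS : RSets P) (C : GStmt P → GStmt P → Prop) (u0 : RNode P) : Prop :=
  ∃ u t v, RReach RS u0 u ∧ EdgeDetects RS C u t v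

/-- The initial node for state `s0`: all recorded sets empty. -/
def initNode (s0 : GState P) : RNode P := ⟨s0, fun _ => ∅⟩

/-! ### Abstract state graphs and density -/

/-- A state graph of `P`. -/
structure StateGraph (P : Program) where
  V : Type
  edge : V → GStmt P → V → Prop
  stateOf : V → GState P
  edge_enabled : ∀ {u t v}, edge u t v → Enabled (stateOf u) t
  edge_exec : ∀ {u t v}, edge u t v → stateOf v = execute (stateOf u) t
  edge_det : ∀ {u t v v'}, edge u t v → edge u t v' → v = v'

/-- The ample set of a node: the labels of its outgoing edges. -/
def StateGraph.ample (G : StateGraph P) (u : G.V) : Set (GStmt P) :=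
  {t | ∃ v, G.edge u t v}

/-- Paths in a state graph. -/
inductive GPath (G : StateGraph P) : G.V → List (GStmt P) → G.V → Prop
  | nil (u : G.V) : GPath G u [] u
  | cons {u v w : G.V} {t : GStmt P} {l : List (GStmt P)} :
      G.edge u t v → GPath G v l w → GPath G u (t :: l) w

/-- Density of a state graph (the four ample-set conditions). -/
def StateGraph.IsDense (G : StateGraph P) : Prop :=
  (∀ u, (∃ t, Enabled (G.stateOf u) t) → (G.ample u).Nonempty) ∧
  (∀ u t t', t ∈ G.ample u → Enabled (G.stateOf u) t' → t'.1 = t.1 → t' ∈ G.ample u) ∧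
  (∀ u, G.ample u ≠ {t | Enabled (G.stateOf u) t} → ∀ t ∈ G.ample u, t.isNsync) ∧
  (∀ u l, l ≠ [] → GPath G u l u →
    ∃ v l1 l2, l = l1 ++ l2 ∧ GPath G u l1 v ∧
      G.ample v = {t | Enabled (G.stateOf v) t})

/-! ### Paths as functions and block decompositions -/

/-- A path in the race-detecting state graph presented as a node function `f`
along a statement list `ts`. -/
def IsPathFn (RS : RSets P) (f : ℕ → RNode P) (ts : List (GStmt P)) : Prop :=
  ∀ k (h : k < ts.length), REdge RS (f k) (ts.get ⟨k, h⟩) (f (k+1))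

/-- The statement at position `m` continues the block started at position `b`:
it is from the same thread and that thread is normal at the node it executes from. -/
def SameBlockStep (RS : RSets P) (f : ℕ → RNode P) (ts : List (GStmt P)) (b m : ℕ) : Prop :=
  tidAt ts m = tidAt ts b ∧ ∃ t, ts[m]? = some t ∧ Normal RS (f m).st t.1

/-- `c 0 = 0 < c 1 < ⋯ < c N = |ts|` is the block decomposition of the path
`(f, ts)`: block `j` covers positions `[c j, c (j+1))`. -/
structure IsBlockDecomp (RS : RSets P) (f : ℕ → RNode P) (ts : List (GStmt P))
    (N : ℕ) (c : ℕ → ℕ) : Prop where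
  zero : c 0 = 0
  last : c N = ts.length
  mono : ∀ j, j < N → c j < c (j+1)
  inside : ∀ j, j < N → ∀ m, c j < m → m < c (j+1) → SameBlockStep RS f ts (c j) m
  boundary : ∀ j, j < N → c (j+1) < ts.length → ¬ SameBlockStep RS f ts (c j) (c (j+1))

/-- Block `j` is initial: its thread is normal at its starting node. -/
def BlockInitial (RS : RSets P) (f : ℕ → RNode P) (ts : List (GStmt P))
    (c : ℕ → ℕ) (j : ℕ) : Prop :=
  ∃ t, ts[c j]? = some t ∧ Normal RS (f (c j)).st t.1

/-- Block `j` is complete: its thread is not normal at its final node. -/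
def BlockComplete (RS : RSets P) (f : ℕ → RNode P) (ts : List (GStmt P))
    (c : ℕ → ℕ) (j : ℕ) : Prop :=
  ∀ t, ts[c j]? = some t → ¬ Normal RS (f (c (j+1))).st t.1

/-- The position permutation induced by transposing the adjacent segments
`[a,b)` and `[b,d)`. -/
def segSwap (a b d m : ℕ) : ℕ :=
  if m < a then m else if m < b then m + (d - b) else if m < d then m - (b - a) else m

/-- The position permutation induced by transposing positions `p` and `p+1`. -/
def posSwap (p m : ℕ) : ℕ :=
  if m = p then p + 1 else if m = p + 1 then p else m

lemma loc_exec_ne (s : GState P) (t : GStmt P) (i : Fin P.n) (h : i ≠ t.1) :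
    (execute s t).loc i = s.loc i := by
  obtain ⟨j, st⟩ := t
  cases st <;> simp_all [execute, Function.update_of_ne h]

lemma normal_back (hnb : NoBarriers P) (RS : RSets P) {s s' : GState P} {i : Fin P.n}
    (hloc : s'.loc i = s.loc i) (hn : Normal RS s' i) : Normal RS s i := by
  obtain ⟨hR, st, hen⟩ := hn
  rw [hloc] at hR
  refine ⟨hR, ?_⟩
  cases hk : P.kind i (s.loc i) with
  | acquire l => exact absurd (RS.acq_mem i _ l hk) hR
  | release l => exact absurd (RS.rel_mem i _ l hk) hR
  | barrier => exact absurd hk (hnb i _)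
  | nsync =>
    cases st with
    | nsync m =>
      simp only [Enabled, hloc, hk] at hen
      exact ⟨Stmt.nsync m, by simp only [Enabled, hk]; exact hen⟩
    | acquire l => simp only [Enabled, hloc, hk] at hen
    | release l => simp only [Enabled, hloc, hk] at hen
    | exit => simp only [Enabled, hloc, hk] at hen
  | term =>
    cases st <;> simp only [Enabled, hloc, hk] at hen

lemma c_strict_mono {RS : RSets P} {f : ℕ → RNode P} {ts : List (GStmt P)}
    {N : ℕ} {c : ℕ → ℕ} (hbd : IsBlockDecomp RS f ts N c) :
    ∀ b ≤ N, ∀ a < b, c a < c b := by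
  intro b
  induction b with
  | zero => intro _ a ha; omega
  | succ b ih =>
    intro hb a ha
    rcases Nat.lt_succ_iff_lt_or_eq.mp ha with h | h
    · exact lt_trans (ih (by omega) a h) (hbd.mono b (by omega))
    · subst h; exact hbd.mono a (by omega)

/-- Every block of a finite path other than the last is complete. -/
theorem stmt12 (P : Program) (hnb : NoBarriers P) (RS : RSets P)
    (f : ℕ → RNode P) (ts : List (GStmt P)) (hpath : IsPathFn RS f ts)
    (N : ℕ) (c : ℕ → ℕ) (hbd : IsBlockDecomp RS f ts N c) :
    ∀ j, j + 1 < N → BlockComplete RS f ts c j := by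
  intro j hj t ht hnorm
  have hjN : j < N := by omega
  have hk : c (j+1) < ts.length := by
    have := c_strict_mono hbd N le_rfl (j+1) hj
    rw [hbd.last] at this; exact this
  set k := c (j+1) with hkdef
  -- the edge at position k
  have e2 := hpath k hk
  set t' := ts.get ⟨k, hk⟩ with ht'
  have hsome' : ts[k]? = some t' := List.getElem?_eq_getElem hk
  have hmin2 := e2.2.2.2.2.2 ⟨t.1, hnorm⟩
  by_cases hcase : t'.1 = t.1
  · -- contradicts boundary
    refine hbd.boundary j hjN hk ⟨?_, t', hsome', hcase ▸ hnorm⟩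
    rw [tidAt, tidAt, hsome', ht, Option.map_some, Option.map_some, hcase]
  · -- t'.1 ≠ t.1 : show t.1 ≤ t'.1 via the previous edge, contradiction
    have hcjk : c j < k := hbd.mono j hjN
    set m := k - 1 with hmdef
    have hm1 : m + 1 = k := by omega
    have hm : m < ts.length := by omega
    have e1 := hpath m hm
    set tm := ts.get ⟨m, hm⟩ with htm
    have hsomem : ts[m]? = some tm := List.getElem?_eq_getElem hm
    -- tid of tm is t.1
    have htid : tm.1 = t.1 := by
      rcases eq_or_lt_of_le (by omega : c j ≤ m) with h | h
      · have : ts[c j]? = some tm := h ▸ hsomem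
        rw [ht] at this
        exact congrArg Sigma.fst (Option.some.injEq _ _ ▸ this).symm
      · obtain ⟨htideq, _⟩ := hbd.inside j hjN m h (by omega)
        rw [tidAt, tidAt, hsomem, ht, Option.map_some, Option.map_some] at htideq
        exact Option.some.injEq _ _ ▸ htideq
    -- t'.1 is normal at f m
    have hloc : (f k).st.loc t'.1 = (f m).st.loc t'.1 := by
      have hexec := e1.2.1
      rw [hm1] at hexec
      rw [hexec]
      exact loc_exec_ne _ _ _ (htid ▸ hcase)
    have hnm : Normal RS (f m).st t'.1 := normal_back hnb RS hloc hmin2.1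
    have hmin1 := e1.2.2.2.2.2 ⟨t'.1, hnm⟩
    have h1 : t.1 ≤ t'.1 := htid ▸ hmin1.2 t'.1 hnm
    have h2 : t'.1 ≤ t.1 := hmin2.2 t.1 hnorm
    exact hcase (le_antisymm h2 h1)

end MC
end

section
/- Let u0 be a node of the race-detecting state graph of a barrier-free program such that only finitely many nodes are reachable from u0. Then every finite path starting from u0 can be extended to a complete path (one in which every block is complete). -/
namespace MC

variable {P : Program}

section Aux
variable {P : Program}

lemma normal_iff (hnb : NoBarriers P) (RS : RSets P) (s : GState P) (i : Fin P.n) :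
    Normal RS s i ↔ (s.loc i ∉ RS.R i ∧ P.kind i (s.loc i) = .nsync) := by
  constructor
  · rintro ⟨h1, st, hen⟩
    refine ⟨h1, ?_⟩
    rcases hk : P.kind i (s.loc i) with l | l | _ | _ | _
    · exact absurd (RS.acq_mem i _ l hk) h1
    · exact absurd (RS.rel_mem i _ l hk) h1
    · exact absurd hk (hnb i _)
    · rfl
    · cases st <;> simp [Enabled, hk] at hen
  · rintro ⟨h1, hk⟩
    obtain ⟨m, hm⟩ := P.stmtsNonempty i _ hk
    exact ⟨h1, Stmt.nsync m, by simp [Enabled, hk]; exact hm⟩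

lemma exec_loc_ne (s : GState P) (t : GStmt P) (j : Fin P.n) (hj : j ≠ t.1) :
    (execute s t).loc j = s.loc j := by
  obtain ⟨i, st⟩ := t
  cases st <;> simp_all [execute, Function.update_of_ne hj]

lemma enabled_nsync (s : GState P) (t : GStmt P) (hen : Enabled s t)
    (hk : P.kind t.1 (s.loc t.1) = .nsync) :
    ∃ m, t.2 = Stmt.nsync m ∧ m ∈ P.stmts t.1 (s.loc t.1) := by
  obtain ⟨i, st⟩ := t
  cases st <;> simp_all [Enabled, hk]

lemma exec_loc_self_nsync (s : GState P) (t : GStmt P) (hen : Enabled s t)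
    (hk : P.kind t.1 (s.loc t.1) = .nsync) :
    isLocalStep t.1 (s.loc t.1) ((execute s t).loc t.1) := by
  obtain ⟨i, st⟩ := t
  cases st with
  | nsync m =>
    have hmem : m ∈ P.stmts i (s.loc i) := by simpa [Enabled, hk] using hen
    simp only [isLocalStep, hk]
    exact ⟨m, s.sh, hmem, by simp [execute]⟩
  | acquire l => simp [Enabled, hk] at hen
  | release l => simp [Enabled, hk] at hen
  | exit => simp [Enabled, hk] at hen


lemma step_exists (hnb : NoBarriers P) (RS : RSets P) (u : RNode P)
    (h : ∃ i, Normal RS u.st i) : ∃ p : GStmt P × RNode P, REdge RS u p.1 p.2 := by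
  classical
  let S : Finset (Fin P.n) := Finset.univ.filter (fun i => Normal RS u.st i)
  have hS : S.Nonempty := by obtain ⟨i, hi⟩ := h; exact ⟨i, by simp [S, hi]⟩
  set i := S.min' hS with hidef
  have hiN : Normal RS u.st i := by have := S.min'_mem hS; simpa [S] using this
  have hmin : ∀ j, Normal RS u.st j → i ≤ j := fun j hj => S.min'_le j (by simp [S, hj])
  obtain ⟨hR, hk⟩ := (normal_iff hnb RS u.st i).mp hiN
  obtain ⟨m, hm⟩ := P.stmtsNonempty i _ hk
  have hen : Enabled u.st ⟨i, Stmt.nsync m⟩ := by simp [Enabled, hk]; exact hm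
  refine ⟨⟨⟨i, Stmt.nsync m⟩,
    ⟨execute u.st ⟨i, Stmt.nsync m⟩, Function.update u.hist i (insert m (u.hist i))⟩⟩,
    hen, rfl, ?_, ?_, ?_, ?_⟩
  · intro m' hm'
    simp only at hm'
    obtain rfl : m = m' := by injection hm'
    simp
  · intro hns; exact absurd ⟨m, rfl⟩ hns
  · intro i' hi'
    refine ⟨fun hez => absurd hez.1 (by simp), fun _ => ?_⟩
    exact Function.update_of_ne hi' _ _
  · intro _; exact ⟨hiN, hmin⟩

lemma rpath_snoc {RS : RSets P} {u v w : RNode P} {l : List (GStmt P)} {t : GStmt P}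
    (hp : RPath RS u l v) (he : REdge RS v t w) : RPath RS u (l ++ [t]) w := by
  induction hp with
  | nil => exact .cons he (.nil _)
  | cons h _ ih => exact .cons h (ih he)

lemma pathfn_rpath (RS : RSets P) : ∀ (ts : List (GStmt P)) (f : ℕ → RNode P),
    IsPathFn RS f ts → RPath RS (f 0) ts (f ts.length) := by
  intro ts
  induction ts with
  | nil => intro f _; exact .nil _
  | cons t l ih =>
    intro f h
    have e : REdge RS (f 0) t (f 1) := by simpa using h 0 (by simp)
    have h' : IsPathFn RS (fun k => f (k+1)) l := by
      intro k hk
      simpa using h (k+1) (by simpa using Nat.succ_lt_succ hk)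
    simpa using RPath.cons e (ih _ h')


open Classical in
/-- Greedy cut-point sequence: next position `m` with `m = tlen` or `¬ Adj m`. -/
noncomputable def cuts (tlen : ℕ) (Adj : ℕ → Prop) : ℕ → ℕ :=
  fun j => Nat.rec 0 (fun _ prev =>
    if h : prev < tlen then
      Nat.find (p := fun m => prev < m ∧ m ≤ tlen ∧ (m = tlen ∨ ¬ Adj m))
        ⟨tlen, h, le_rfl, Or.inl rfl⟩
    else prev) j

lemma cuts_zero (tlen : ℕ) (Adj : ℕ → Prop) : cuts tlen Adj 0 = 0 := rfl

open Classical in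
lemma cuts_succ_spec (tlen : ℕ) (Adj : ℕ → Prop) (j : ℕ) (h : cuts tlen Adj j < tlen) :
    cuts tlen Adj j < cuts tlen Adj (j+1) ∧ cuts tlen Adj (j+1) ≤ tlen ∧
    (cuts tlen Adj (j+1) = tlen ∨ ¬ Adj (cuts tlen Adj (j+1))) ∧
    ∀ m, cuts tlen Adj j < m → m < cuts tlen Adj (j+1) → m ≠ tlen ∧ Adj m := by
  have hd : cuts tlen Adj (j+1) =
      Nat.find (p := fun m => cuts tlen Adj j < m ∧ m ≤ tlen ∧ (m = tlen ∨ ¬ Adj m))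
        ⟨tlen, h, le_rfl, Or.inl rfl⟩ := by
    show (if h : cuts tlen Adj j < tlen then _ else _) = _
    rw [dif_pos h]
    congr
  obtain ⟨h1, h2, h3⟩ := Nat.find_spec
    (p := fun m => cuts tlen Adj j < m ∧ m ≤ tlen ∧ (m = tlen ∨ ¬ Adj m))
    ⟨tlen, h, le_rfl, Or.inl rfl⟩
  rw [hd]
  refine ⟨h1, h2, h3, fun m hm1 hm2 => ?_⟩
  have hnot := Nat.find_min (p := fun m => cuts tlen Adj j < m ∧ m ≤ tlen ∧ (m = tlen ∨ ¬ Adj m))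
    ⟨tlen, h, le_rfl, Or.inl rfl⟩ hm2
  simp only [not_and, not_or, not_not] at hnot
  exact hnot hm1 (le_of_lt (lt_of_lt_of_le hm2 h2))

lemma cuts_succ_stay (tlen : ℕ) (Adj : ℕ → Prop) (j : ℕ) (h : ¬ cuts tlen Adj j < tlen) :
    cuts tlen Adj (j+1) = cuts tlen Adj j := by
  show (if h : cuts tlen Adj j < tlen then _ else _) = _
  rw [dif_neg h]
  rfl

lemma cuts_le (tlen : ℕ) (Adj : ℕ → Prop) : ∀ j, cuts tlen Adj j ≤ tlen := by
  intro j
  induction j with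
  | zero => simp [cuts_zero]
  | succ j ih =>
    by_cases h : cuts tlen Adj j < tlen
    · exact (cuts_succ_spec tlen Adj j h).2.1
    · rw [cuts_succ_stay tlen Adj j h]; exact ih

lemma cuts_reaches (tlen : ℕ) (Adj : ℕ → Prop) : ∃ j, cuts tlen Adj j = tlen := by
  have key : ∀ j, j ≤ cuts tlen Adj j ∨ cuts tlen Adj j = tlen := by
    intro j
    induction j with
    | zero => exact Or.inl (Nat.zero_le _)
    | succ j ih =>
      by_cases h : cuts tlen Adj j < tlen
      · rcases ih with ih | ih
        · exact Or.inl (Nat.succ_le_of_lt (lt_of_le_of_lt ih (cuts_succ_spec tlen Adj j h).1))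
        · omega
      · rw [cuts_succ_stay tlen Adj j h]
        have := cuts_le tlen Adj j
        right; omega
  rcases key tlen with h | h
  · exact ⟨tlen, le_antisymm (cuts_le tlen Adj tlen) h⟩
  · exact ⟨tlen, h⟩


lemma ext_exists (hnb : NoBarriers P) (RS : RSets P) (u0 u : RNode P)
    (hfin : {v | RReach RS u0 v}.Finite) (hru : RReach RS u0 u) :
    ∃ (L : ℕ) (g : ℕ → RNode P) (es : ℕ → GStmt P), g 0 = u ∧
      (∀ k, k < L → REdge RS (g k) (es k) (g (k+1))) ∧
      ∀ i, ¬ Normal RS (g L).st i := by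
  classical
  set t0 : GStmt P := ⟨⟨0, P.npos⟩, Stmt.exit⟩ with ht0
  set step : RNode P → GStmt P × RNode P := fun v =>
    if h : ∃ i, Normal RS v.st i then (step_exists hnb RS v h).choose else (t0, v) with hstepdef
  have hstep : ∀ v, (h : ∃ i, Normal RS v.st i) → REdge RS v (step v).1 (step v).2 := by
    intro v h
    simp only [hstepdef, dif_pos h]
    exact (step_exists hnb RS v h).choose_spec
  set g : ℕ → RNode P := fun k => Nat.rec u (fun _ prev => (step prev).2) k with hgdef
  have hgsucc : ∀ k, g (k+1) = (step (g k)).2 := fun _ => rfl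
  set es : ℕ → GStmt P := fun k => (step (g k)).1 with hesdef
  have hterm : ∃ k, ¬ ∃ i, Normal RS (g k).st i := by
    by_contra hball
    push_neg at hball
    have hb : ∀ k, ∃ i, Normal RS (g k).st i := hball
    have hedge : ∀ k, REdge RS (g k) (es k) (g (k+1)) := fun k => by
      rw [hgsucc k]; exact hstep (g k) (hb k)
    have hreach : ∀ k, RReach RS u0 (g k) := by
      intro k
      induction k with
      | zero => exact hru
      | succ k ih =>
        obtain ⟨l, hl⟩ := ih
        exact ⟨l ++ [es k], rpath_snoc hl (hedge k)⟩
    have hmap : Set.MapsTo g (Set.univ : Set ℕ) {v | RReach RS u0 v} := fun k _ => hreach k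
    obtain ⟨k1, -, k2, -, hne, heq⟩ :=
      Set.infinite_univ.exists_ne_map_eq_of_mapsTo hmap hfin
    have hmover : ∀ m, Normal RS (g m).st (es m).1 ∧
        ∀ j, Normal RS (g m).st j → (es m).1 ≤ j :=
      fun m => (hedge m).2.2.2.2.2 (hb m)
    have backstep : ∀ m j, Normal RS (g (m+1)).st j → Normal RS (g m).st j := by
      intro m j hj
      by_cases hje : j = (es m).1
      · subst hje; exact (hmover m).1
      · have hloc : (g (m+1)).st.loc j = (g m).st.loc j := by
          rw [(hedge m).2.1]
          exact exec_loc_ne _ _ j hje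
        rw [normal_iff hnb RS] at hj ⊢
        rwa [hloc] at hj
    have backchain : ∀ d a j, Normal RS (g (a + d)).st j → Normal RS (g a).st j := by
      intro d
      induction d with
      | zero => intro a j h; exact h
      | succ d ih =>
        intro a j h
        exact ih a j (backstep (a + d) j h)
    have key : ∀ k k', k < k' → g k = g k' → False := by
      intro k k' hkk hgg
      set i := (es k).1 with hi
      have hiNk : Normal RS (g k).st i := (hmover k).1
      have hiN : ∀ m, k ≤ m → m ≤ k' → Normal RS (g m).st i := by
        intro m h1 h2
        have hk' : Normal RS (g k').st i := by rw [← hgg]; exact hiNk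
        exact backchain (k' - m) m i (by rwa [Nat.add_sub_cancel' h2])
      have hmeq : ∀ m, k ≤ m → m < k' → (es m).1 = i := by
        intro m h1 h2
        refine le_antisymm ((hmover m).2 i (hiN m h1 (le_of_lt h2))) ?_
        have h3 : Normal RS (g k).st (es m).1 :=
          backchain (m - k) k _ (by rw [Nat.add_sub_cancel' h1]; exact (hmover m).1)
        exact (hmover k).2 _ h3
      have hls : ∀ m, k ≤ m → m < k' →
          (fun a b => a ∉ RS.R i ∧ b ∉ RS.R i ∧ isLocalStep i a b)
            ((g m).st.loc i) ((g (m+1)).st.loc i) := by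
        intro m h1 h2
        have hNm := hiN m h1 (le_of_lt h2)
        have hNm1 : Normal RS (g (m+1)).st i := hiN (m+1) (le_trans h1 (Nat.le_succ m)) h2
        obtain ⟨hR1, hk1⟩ := (normal_iff hnb RS _ i).mp hNm
        obtain ⟨hR2, _⟩ := (normal_iff hnb RS _ i).mp hNm1
        refine ⟨hR1, hR2, ?_⟩
        have hme := hmeq m h1 h2
        have hloc := exec_loc_self_nsync (g m).st (es m) (hedge m).1
          (by rw [hme]; exact hk1)
        rw [hme] at hloc
        have hst : (g (m+1)).st = execute (g m).st (es m) := (hedge m).2.1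
        rw [hst]
        exact hloc
      have hchain : ∀ d, 0 < d → k + d ≤ k' →
          Relation.TransGen (fun a b => a ∉ RS.R i ∧ b ∉ RS.R i ∧ isLocalStep i a b)
            ((g k).st.loc i) ((g (k + d)).st.loc i) := by
        intro d
        induction d with
        | zero => intro h; exact absurd h (lt_irrefl 0)
        | succ d ih =>
          intro _ hle
          rcases Nat.eq_zero_or_pos d with rfl | hd
          · exact Relation.TransGen.single (hls k le_rfl (by omega))
          · exact (ih hd (by omega)).tail (hls (k+d) (by omega) (by omega))
      have hcyc := hchain (k' - k) (by omega) (by omega)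
      rw [Nat.add_sub_cancel' (le_of_lt hkk), ← hgg] at hcyc
      exact RS.acyclic i _ ((normal_iff hnb RS _ i).mp hiNk).1 hcyc
    rcases hne.lt_or_gt with hk | hk
    · exact key k1 k2 hk heq
    · exact key k2 k1 hk heq.symm
  refine ⟨Nat.find hterm, g, es, rfl, ?_, ?_⟩
  · intro k hk
    have h : ∃ i, Normal RS (g k).st i := not_not.mp (Nat.find_min hterm hk)
    rw [hgsucc k]; exact hstep (g k) h
  · intro i hi
    exact (Nat.find_spec hterm) ⟨i, hi⟩

end Aux

/-- Every finite path from a node with finitely many reachable nodes can be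
extended to a complete path. -/
theorem stmt13 (P : Program) (hnb : NoBarriers P) (RS : RSets P)
    (u0 : RNode P) (hfin : {v | RReach RS u0 v}.Finite)
    (f : ℕ → RNode P) (ts : List (GStmt P))
    (hpath : IsPathFn RS f ts) (h0 : f 0 = u0) :
    ∃ (f' : ℕ → RNode P) (ext : List (GStmt P)) (N : ℕ) (c : ℕ → ℕ),
      IsPathFn RS f' (ts ++ ext) ∧ (∀ k, k ≤ ts.length → f' k = f k) ∧
      IsBlockDecomp RS f' (ts ++ ext) N c ∧
      ∀ j, j < N → BlockComplete RS f' (ts ++ ext) c j := by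
  classical
  by_cases hts : ts = []
  · subst hts
    refine ⟨f, [], 0, fun _ => 0, by simpa using hpath, fun k _ => rfl,
      ⟨rfl, by simp, ?_, ?_, ?_⟩, ?_⟩ <;> intro j hj <;> omega
  -- main case
  have hlen0 : 0 < ts.length := List.length_pos_iff.mpr hts
  have hreach_end : RReach RS u0 (f ts.length) :=
    ⟨ts, by rw [← h0]; exact pathfn_rpath RS ts f hpath⟩
  obtain ⟨L, g, es, hg0, hged, hgterm⟩ := ext_exists hnb RS u0 (f ts.length) hfin hreach_end
  set ext : List (GStmt P) := (List.range L).map es with hext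
  have hextlen : ext.length = L := by simp [hext]
  set f' : ℕ → RNode P := fun k => if k ≤ ts.length then f k else g (k - ts.length) with hf'
  have hagree : ∀ k, k ≤ ts.length → f' k = f k := fun k hk => by simp [hf', hk]
  have hf'g : ∀ m, f' (ts.length + m) = g m := by
    intro m
    cases m with
    | zero => simpa [hf'] using hg0.symm
    | succ m =>
      show (if ts.length + (m+1) ≤ ts.length then f (ts.length + (m+1))
        else g (ts.length + (m+1) - ts.length)) = g (m+1)
      rw [if_neg (by omega)]
      congr 1
      omega
  set TS := ts ++ ext with hTS
  have hTSlen : TS.length = ts.length + L := by simp [hTS, hextlen]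
  have hpath' : IsPathFn RS f' TS := by
    intro k hk
    by_cases hklt : k < ts.length
    · have hget : TS.get ⟨k, hk⟩ = ts.get ⟨k, hklt⟩ := by
        simp only [hTS, List.get_eq_getElem]
        exact List.getElem_append_left hklt
      rw [hget, hagree k (le_of_lt hklt), hagree (k+1) hklt]
      exact hpath k hklt
    · push_neg at hklt
      have hm : k - ts.length < L := by
        rw [hTSlen] at hk; omega
      have h1 : f' k = g (k - ts.length) := by
        have h := hf'g (k - ts.length)
        rwa [show ts.length + (k - ts.length) = k by omega] at h
      have h2 : f' (k+1) = g (k - ts.length + 1) := by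
        rw [show k + 1 = ts.length + (k - ts.length + 1) by omega]
        exact hf'g _
      have hget : TS.get ⟨k, hk⟩ = es (k - ts.length) := by
        simp [hTS, List.getElem_append_right hklt, hextlen, hext]
      rw [hget, h1, h2]
      exact hged _ hm
  have hfinal : ∀ i, ¬ Normal RS (f' TS.length).st i := by
    rw [hTSlen, hf'g L]
    exact hgterm
  set Adj : ℕ → Prop := fun m => SameBlockStep RS f' TS (m-1) m with hAdjdef
  set c : ℕ → ℕ := cuts TS.length Adj with hc
  set N : ℕ := Nat.find (cuts_reaches TS.length Adj) with hNdef
  have hcN : c N = TS.length := Nat.find_spec (cuts_reaches TS.length Adj)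
  have hclt : ∀ j, j < N → c j < TS.length := fun j hj =>
    lt_of_le_of_ne (cuts_le _ _ j) (Nat.find_min (cuts_reaches TS.length Adj) hj)
  have hspec : ∀ j, j < N →
      c j < c (j+1) ∧ c (j+1) ≤ TS.length ∧ (c (j+1) = TS.length ∨ ¬ Adj (c (j+1))) ∧
      ∀ m, c j < m → m < c (j+1) → m ≠ TS.length ∧ Adj m :=
    fun j hj => cuts_succ_spec TS.length Adj j (hclt j hj)
  have hSBS : ∀ j, j < N → ∀ m, c j < m → m < c (j+1) → SameBlockStep RS f' TS (c j) m := by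
    intro j hj m
    induction m with
    | zero => omega
    | succ m ih =>
      intro h1 h2
      have hA : SameBlockStep RS f' TS m (m+1) := ((hspec j hj).2.2.2 (m+1) h1 h2).2
      rcases Nat.lt_or_ge (c j) m with hm | hm
      · have hS := ih hm (by omega)
        exact ⟨hA.1.trans hS.1, hA.2⟩
      · have hcj : m = c j := by omega
        rw [← hcj]
        exact hA
  refine ⟨f', ext, N, c, hpath', hagree, ⟨rfl, hcN, fun j hj => (hspec j hj).1, hSBS, ?_⟩, ?_⟩
  · -- boundary
    intro j hj hlt hS
    rw [← hTS] at hlt hS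
    have hA : ¬ Adj (c (j+1)) := (hspec j hj).2.2.1.resolve_left (by omega)
    apply hA
    refine ⟨?_, hS.2⟩
    rcases Nat.lt_or_ge (c j) (c (j+1) - 1) with hm | hm
    · have h1 := (hSBS j hj (c (j+1) - 1) hm (by have := (hspec j hj).1; omega)).1
      exact hS.1.trans h1.symm
    · have h1 : c (j+1) - 1 = c j := by have := (hspec j hj).1; omega
      rw [h1]
      exact hS.1
  · -- completeness
    intro j hj t ht hNm
    rw [← hTS] at ht
    by_cases he : c (j+1) = TS.length
    · rw [he] at hNm
      exact hfinal t.1 hNm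
    · have helt : c (j+1) < TS.length := lt_of_le_of_ne (hspec j hj).2.1 he
      have hcjlt : c j < c (j+1) := (hspec j hj).1
      have hE := hpath' (c (j+1)) helt
      set tE := TS.get ⟨c (j+1), helt⟩ with htE
      have hlast := hE.2.2.2.2.2 ⟨t.1, hNm⟩
      have htse : TS[c (j+1)]? = some tE := by
        rw [htE]; exact List.getElem?_eq_getElem helt
      have htid_e : tidAt TS (c (j+1)) = some tE.1 := by simp [tidAt, htse]
      have htid_cj : tidAt TS (c j) = some t.1 := by simp [tidAt, ht]
      have hAdj : ¬ Adj (c (j+1)) := (hspec j hj).2.2.1.resolve_left he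
      have htne : tidAt TS (c (j+1)) ≠ tidAt TS (c (j+1) - 1) := by
        intro hcon
        exact hAdj ⟨hcon, tE, htse, hlast.1⟩
      have htid_e1 : tidAt TS (c (j+1) - 1) = some t.1 := by
        rcases Nat.lt_or_ge (c j) (c (j+1) - 1) with hm | hm
        · rw [(hSBS j hj (c (j+1) - 1) hm (by omega)).1]
          exact htid_cj
        · have h1 : c (j+1) - 1 = c j := by omega
          rw [h1]; exact htid_cj
      have htEne : tE.1 ≠ t.1 := by
        intro hcon
        apply htne
        rw [htid_e, htid_e1, hcon]
      have htElt : tE.1 < t.1 := lt_of_le_of_ne (hlast.2 t.1 hNm) htEne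
      have he1lt : c (j+1) - 1 < TS.length := by omega
      have hE' := hpath' (c (j+1) - 1) he1lt
      have hesucc : c (j+1) - 1 + 1 = c (j+1) := by omega
      set t' := TS.get ⟨c (j+1) - 1, he1lt⟩ with ht'
      have ht'1 : t'.1 = t.1 := by
        have h1 : tidAt TS (c (j+1) - 1) = some t'.1 := by
          simp [tidAt, ht', List.getElem?_eq_getElem he1lt]
        rw [h1] at htid_e1
        exact Option.some.inj htid_e1
      have hNtE : Normal RS (f' (c (j+1) - 1)).st tE.1 := by
        have hloc : (f' (c (j+1))).st.loc tE.1 = (f' (c (j+1) - 1)).st.loc tE.1 := by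
          have hst : (f' (c (j+1))).st = execute (f' (c (j+1) - 1)).st t' := by
            have h1 := hE'.2.1
            rw [hesucc] at h1
            exact h1
          rw [hst]
          exact exec_loc_ne _ _ _ (by rw [ht'1]; exact htEne)
        have hNe := hlast.1
        rw [normal_iff hnb RS] at hNe ⊢
        rwa [hloc] at hNe
      have hmin' := hE'.2.2.2.2.2 ⟨tE.1, hNtE⟩
      have h2 : t'.1 ≤ tE.1 := hmin'.2 tE.1 hNtE
      rw [ht'1] at h2
      exact absurd h2 (not_le.mpr htElt)

end MC
end

section
/- Race detection theorem (barrier-free case), part 2: Under the same hypotheses, if there is a data race-free execution of P from s0 to some state s_f with enabled(s_f) = ∅, then there is a path in the race-detecting state graph from u0 to a node whose state component is s_f. -/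
namespace MC

variable {P : Program}

/-! ### Auxiliary lemmas for part 2 -/

section Aux

variable {P : Program}

lemma aux_isBarrier_false (hnb : NoBarriers P) (i : Fin P.n) (σ : P.Local i) :
    (P.kind i σ).isBarrier = false := by
  cases h : P.kind i σ <;> first | rfl | exact absurd h (hnb i σ)

lemma aux_execute_wait (hnb : NoBarriers P) (s : GState P) (t : GStmt P) :
    (execute s t).wait = s.wait := by
  obtain ⟨i, st⟩ := t
  cases st <;> simp [execute, aux_isBarrier_false hnb]

lemma aux_execute_loc_ne (s : GState P) (i : Fin P.n) (st : Stmt P.Lock (P.NStmt i))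
    (j : Fin P.n) (hj : j ≠ i) : (execute s ⟨i, st⟩).loc j = s.loc j := by
  cases st <;> simp [execute, Function.update_of_ne hj]

lemma aux_execute_lk_nsync (s : GState P) (i : Fin P.n) (m : P.NStmt i) :
    (execute s ⟨i, Stmt.nsync m⟩).lk = s.lk := by simp [execute]

lemma aux_enabled_exit {s : GState P} {i : Fin P.n} (h : Enabled s ⟨i, Stmt.exit⟩) :
    P.kind i (s.loc i) = LKind.barrier := by
  cases hk : P.kind i (s.loc i) <;> simp [Enabled, hk] at h <;> rfl

lemma aux_no_exit_enabled (hnb : NoBarriers P) (s : GState P) (i : Fin P.n) :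
    ¬ Enabled s ⟨i, Stmt.exit⟩ := fun h => hnb i _ (aux_enabled_exit h)

lemma aux_enabled_nsync_iff (s : GState P) (i : Fin P.n) (m : P.NStmt i) :
    Enabled s ⟨i, Stmt.nsync m⟩ ↔
      P.kind i (s.loc i) = LKind.nsync ∧ m ∈ P.stmts i (s.loc i) := by
  cases hk : P.kind i (s.loc i) <;> simp [Enabled, hk]

lemma aux_enabled_shape_nsync {s : GState P} {i : Fin P.n} {st}
    (hk : P.kind i (s.loc i) = LKind.nsync)
    (h : Enabled s ⟨i, st⟩) : ∃ m, st = Stmt.nsync m ∧ m ∈ P.stmts i (s.loc i) := by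
  cases st <;> simp [Enabled, hk] at h ⊢ <;> exact h

lemma aux_enabled_term {s : GState P} {i : Fin P.n} {st}
    (hk : P.kind i (s.loc i) = LKind.term) : ¬ Enabled s ⟨i, st⟩ := by
  cases st <;> simp [Enabled, hk]

lemma aux_enabled_congr {s s' : GState P} {j : Fin P.n} {st}
    (hloc : s'.loc j = s.loc j) (hlk : s'.lk = s.lk) (hw : s'.wait = s.wait)
    (h : Enabled s ⟨j, st⟩) : Enabled s' ⟨j, st⟩ := by
  simp only [Enabled] at h ⊢
  rw [hloc, hlk, hw]
  exact h

lemma aux_gstate_ext {a b : GState P} (h1 : a.loc = b.loc) (h2 : a.sh = b.sh)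
    (h3 : a.lk = b.lk) (h4 : a.wait = b.wait) : a = b := by
  cases a; cases b
  simp only at h1 h2 h3 h4
  subst h1; subst h2; subst h3; subst h4; rfl

lemma aux_commute (hnb : NoBarriers P) {s : GState P} {i j : Fin P.n} (hij : j ≠ i)
    (m : P.NStmt i) (st0 : Stmt P.Lock (P.NStmt j))
    (hn : ∀ m0, st0 ≠ Stmt.nsync m0) :
    execute (execute s ⟨j, st0⟩) ⟨i, Stmt.nsync m⟩
      = execute (execute s ⟨i, Stmt.nsync m⟩) ⟨j, st0⟩ := by
  have hji : i ≠ j := fun h => hij h.symm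
  cases st0 with
  | acquire l =>
    apply aux_gstate_ext <;>
      simp [execute, aux_isBarrier_false hnb, Function.update_of_ne hij,
        Function.update_of_ne hji, Function.update_comm hij]
  | release l =>
    apply aux_gstate_ext <;>
      simp [execute, aux_isBarrier_false hnb, Function.update_of_ne hij,
        Function.update_of_ne hji, Function.update_comm hij]
  | exit =>
    apply aux_gstate_ext <;>
      simp [execute, aux_isBarrier_false hnb, Function.update_of_ne hij,
        Function.update_of_ne hji, Function.update_comm hij]
  | nsync m0 => exact absurd rfl (hn m0)

end Aux


section Aux2

variable {P : Program}

/-- No exit statements occur in the list. -/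
abbrev NoExit (ts : List (GStmt P)) : Prop :=
  ∀ (k : ℕ) (t : GStmt P), ts[k]? = some t → t.2 ≠ Stmt.exit

lemma aux_exec_nil {s sf : GState P} (h : Exec s ([] : List (GStmt P)) sf) : s = sf := by
  cases h; rfl

lemma aux_exec_cons {s sf : GState P} {t : GStmt P} {ts : List (GStmt P)}
    (h : Exec s (t :: ts) sf) : Enabled s t ∧ Exec (execute s t) ts sf := by
  cases h with | cons h1 h2 h3 => exact ⟨h1, h2 ▸ h3⟩

lemma aux_noExit_of_exec (hnb : NoBarriers P) :
    ∀ {ts : List (GStmt P)} {s sf : GState P}, Exec s ts sf → NoExit ts := by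
  intro ts
  induction ts with
  | nil => intro s sf _ k t hk; simp at hk
  | cons t0 l ih =>
    intro s sf h k t hk
    obtain ⟨h1, h2⟩ := aux_exec_cons h
    match k with
    | 0 =>
      simp at hk
      subst hk
      intro he
      obtain ⟨i, st⟩ := t0
      simp only [] at he
      subst he
      exact aux_no_exit_enabled hnb s i h1
    | (k+1) =>
      rw [List.getElem?_cons_succ] at hk
      exact ih h2 k t hk

lemma aux_loc_const_of_exec {i : Fin P.n} :
    ∀ {ts : List (GStmt P)} {s sf : GState P}, Exec s ts sf →
      (∀ (k : ℕ) (t : GStmt P), ts[k]? = some t → t.1 ≠ i) → sf.loc i = s.loc i := by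
  intro ts
  induction ts with
  | nil => intro s sf h _; rw [aux_exec_nil h]
  | cons t0 l ih =>
    intro s sf h hni
    obtain ⟨h1, h2⟩ := aux_exec_cons h
    have h0 : t0.1 ≠ i := hni 0 t0 (by simp)
    have hrec := ih h2 (fun k t hk => hni (k+1) t (by simpa using hk))
    rw [hrec]
    obtain ⟨j, st⟩ := t0
    exact aux_execute_loc_ne s j st i (Ne.symm h0)

/-- The generating relation of happens-before. -/
abbrev Gen (ts : List (GStmt P)) (j k : ℕ) : Prop :=
  IntraThread ts j k ∨ RelAcq ts j k ∨ BarrierRel ts j k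

lemma aux_epoch_zero {ts : List (GStmt P)} (hne : NoExit ts) (k : ℕ) : epoch ts k = 0 := by
  unfold epoch
  convert Set.ncard_empty ℕ
  ext m
  simp only [Set.mem_setOf_eq, Set.mem_empty_iff_false, iff_false]
  rintro ⟨-, -, hs⟩
  obtain ⟨t, hmt, ht⟩ := hs
  exact hne m t hmt ht

lemma aux_barrier_false {ts : List (GStmt P)} (hne : NoExit ts) (j k : ℕ) :
    ¬ BarrierRel ts j k := by
  intro h
  unfold BarrierRel at h
  obtain ⟨-, -, hlt⟩ := h
  rw [aux_epoch_zero hne, aux_epoch_zero hne] at hlt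
  exact lt_irrefl 0 hlt

lemma aux_gen_lt {ts : List (GStmt P)} (hne : NoExit ts) {j k : ℕ} (h : Gen ts j k) :
    j < k := by
  rcases h with h | h | h
  · unfold IntraThread at h; exact h.1
  · unfold RelAcq at h; obtain ⟨l, hlt, -⟩ := h; exact hlt
  · exact absurd h (aux_barrier_false hne j k)

lemma aux_hb_lt {ts : List (GStmt P)} (hne : NoExit ts) {j k : ℕ} (h : HB ts j k) :
    j < k := by
  have h' : Relation.TransGen (Gen ts) j k := h
  clear h
  induction h' with
  | single h => exact aux_gen_lt hne h
  | tail h1 h2 ih => exact lt_trans ih (aux_gen_lt hne h2)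

lemma aux_tidAt_cons (t : GStmt P) (l : List (GStmt P)) (m : ℕ) :
    tidAt (t :: l) (m+1) = tidAt l m := by simp [tidAt]

lemma aux_stmtIs_cons (t : GStmt P) (l : List (GStmt P)) (m : ℕ) (p : GStmt P → Prop) :
    stmtIs (t :: l) (m+1) p ↔ stmtIs l m p := by simp [stmtIs]

lemma aux_gen_cons_down {t : GStmt P} {l : List (GStmt P)} {a b : ℕ}
    (hne : NoExit (t :: l)) (h : Gen (t :: l) (a+1) (b+1)) : Gen l a b := by
  rcases h with h | h | h
  · unfold IntraThread at h
    obtain ⟨h1, h2, h3⟩ := h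
    refine Or.inl ⟨by omega, by simp at h2; omega, ?_⟩
    rwa [aux_tidAt_cons, aux_tidAt_cons] at h3
  · unfold RelAcq at h
    obtain ⟨lk, h1, h2, h3, h4⟩ := h
    refine Or.inr (Or.inl ⟨lk, by omega, (aux_stmtIs_cons ..).mp h2,
      (aux_stmtIs_cons ..).mp h3, ?_⟩)
    intro m hm1 hm2 hc
    exact h4 (m+1) (by omega) (by omega) ((aux_stmtIs_cons ..).mpr hc)
  · exact absurd h (aux_barrier_false hne _ _)

lemma aux_hb_cons_down {t : GStmt P} {l : List (GStmt P)} (hne : NoExit (t :: l)) :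
    ∀ a b, HB (t :: l) (a+1) (b+1) → HB l a b := by
  have key : ∀ x y, Relation.TransGen (Gen (t :: l)) x y →
      ∀ a, x = a+1 → ∀ b, y = b+1 → Relation.TransGen (Gen l) a b := by
    intro x y h
    induction h with
    | single h =>
      rintro a rfl b rfl
      exact Relation.TransGen.single (aux_gen_cons_down hne h)
    | @tail m c h1 h2 ih =>
      rintro a rfl b rfl
      have hm : a+1 < m := aux_hb_lt hne h1
      obtain ⟨c', rfl⟩ : ∃ c', m = c'+1 := ⟨m-1, by omega⟩
      exact Relation.TransGen.tail (ih a rfl c' rfl) (aux_gen_cons_down hne h2)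
  intro a b h
  exact key _ _ h a rfl b rfl

/-- Conflicting pairs in the trace are always happens-before ordered. -/
abbrev Inv (C : GStmt P → GStmt P → Prop) (ts : List (GStmt P)) : Prop :=
  ∀ (j k : ℕ) (tj tk : GStmt P), j < k → ts[j]? = some tj → ts[k]? = some tk → C tj tk →
    HB ts j k

lemma aux_inv_of_noRace {C : GStmt P → GStmt P → Prop} {ts : List (GStmt P)}
    (hne : NoExit ts) (h : ¬ HasRace C ts) : Inv C ts := by
  intro j k tj tk hjk hj hk hc
  by_contra hnhb
  exact h ⟨j, k, ⟨tj, tk, hj, hk, hc⟩, hnhb,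
    fun hkj => absurd (aux_hb_lt hne hkj) (by omega)⟩

lemma aux_inv_tail {C : GStmt P → GStmt P → Prop} {t : GStmt P} {l : List (GStmt P)}
    (hne : NoExit (t :: l)) (h : Inv C (t :: l)) : Inv C l := by
  intro j k tj tk hjk hj hk hc
  exact aux_hb_cons_down hne j k
    (h (j+1) (k+1) tj tk (by omega) (by simpa using hj) (by simpa using hk) hc)

lemma aux_no_hb_into {ts : List (GStmt P)} (hne : NoExit ts) {k : ℕ} {i : Fin P.n}
    {mm : P.NStmt i} (hk : ts[k]? = some ⟨i, Stmt.nsync mm⟩)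
    (hfirst : ∀ j, j < k → ∀ tj : GStmt P, ts[j]? = some tj → tj.1 ≠ i) :
    ∀ j, ¬ HB ts j k := by
  have hgen : ∀ j, ¬ Gen ts j k := by
    intro j hg
    rcases hg with hg | hg | hg
    · unfold IntraThread at hg
      obtain ⟨h1, h2, h3⟩ := hg
      have hk' : tidAt ts k = some i := by simp [tidAt, hk]
      rw [hk'] at h3
      obtain ⟨tj, htj, htid⟩ : ∃ tj : GStmt P, ts[j]? = some tj ∧ tj.1 = i := by
        unfold tidAt at h3
        cases hj : ts[j]? with
        | none => rw [hj] at h3; simp at h3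
        | some tj => rw [hj] at h3; simp at h3; exact ⟨tj, rfl, h3⟩
      exact hfirst j h1 tj htj htid
    · unfold RelAcq at hg
      obtain ⟨l, h1, h2, h3, h4⟩ := hg
      obtain ⟨tk', htk', hacq⟩ := h3
      rw [hk] at htk'
      cases htk'
      simp [GStmt.isAcquireOn] at hacq
    · exact aux_barrier_false hne _ _ hg
  intro j hj
  have hj' : Relation.TransGen (Gen ts) j k := hj
  cases hj' with
  | single h => exact hgen _ h
  | tail h1 h2 => exact hgen _ h2

/-- The permutation moving position `k` to the front. -/
def piF (k m : ℕ) : ℕ := if m < k then m + 1 else if m = k then 0 else m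

lemma aux_piF_lt {k a b : ℕ} (hab : a < b) (hbk : b ≠ k) : piF k a < piF k b := by
  unfold piF; split_ifs <;> omega

lemma aux_piF_lt_len {k b n : ℕ} (hb : b < n) (hk : k < n) : piF k b < n := by
  unfold piF; split_ifs <;> omega

lemma aux_getElem_lt {ts : List (GStmt P)} {k : ℕ} {tk : GStmt P}
    (hk : ts[k]? = some tk) : k < ts.length := by
  by_contra h
  rw [List.getElem?_eq_none (by omega)] at hk
  cases hk

lemma aux_length_moveFront {ts : List (GStmt P)} {k : ℕ} (hklen : k < ts.length)
    (tk : GStmt P) : (tk :: ts.eraseIdx k).length = ts.length := by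
  simp [List.length_eraseIdx_of_lt hklen]
  omega

lemma aux_getElem_moveFront {ts : List (GStmt P)} {k : ℕ} {tk : GStmt P}
    (hk : ts[k]? = some tk) : ∀ m, (tk :: ts.eraseIdx k)[piF k m]? = ts[m]? := by
  intro m
  unfold piF
  split_ifs with h1 h2
  · show (tk :: ts.eraseIdx k)[m+1]? = _
    rw [List.getElem?_cons_succ, List.getElem?_eraseIdx_of_lt h1]
  · subst h2; simpa using hk.symm
  · obtain ⟨m', rfl⟩ : ∃ m', m = m'+1 := ⟨m-1, by omega⟩
    rw [List.getElem?_cons_succ, List.getElem?_eraseIdx_of_ge (by omega)]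

lemma aux_tidAt_moveFront {ts : List (GStmt P)} {k : ℕ} {tk : GStmt P}
    (hk : ts[k]? = some tk) (m : ℕ) :
    tidAt (tk :: ts.eraseIdx k) (piF k m) = tidAt ts m := by
  unfold tidAt; rw [aux_getElem_moveFront hk]

lemma aux_stmtIs_moveFront {ts : List (GStmt P)} {k : ℕ} {tk : GStmt P}
    (hk : ts[k]? = some tk) (m : ℕ) (p : GStmt P → Prop) :
    stmtIs (tk :: ts.eraseIdx k) (piF k m) p ↔ stmtIs ts m p := by
  unfold stmtIs; rw [aux_getElem_moveFront hk]

lemma aux_noExit_moveFront {ts : List (GStmt P)} {k : ℕ} {tk : GStmt P}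
    (hne : NoExit ts) (hk : ts[k]? = some tk) : NoExit (tk :: ts.eraseIdx k) := by
  intro m t hm
  match m with
  | 0 =>
    simp at hm
    subst hm
    exact hne k tk hk
  | (m+1) =>
    rw [List.getElem?_cons_succ, List.getElem?_eraseIdx] at hm
    split at hm
    · exact hne m t hm
    · exact hne (m+1) t hm

lemma aux_gen_moveFront {ts : List (GStmt P)} {k : ℕ} {i : Fin P.n} {mm : P.NStmt i}
    (hk : ts[k]? = some ⟨i, Stmt.nsync mm⟩) (hne : NoExit ts)
    {a b : ℕ} (hbk : b ≠ k) (hg : Gen ts a b) :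
    Gen ((⟨i, Stmt.nsync mm⟩ : GStmt P) :: ts.eraseIdx k) (piF k a) (piF k b) := by
  have hklen : k < ts.length := aux_getElem_lt hk
  rcases hg with hg | hg | hg
  · unfold IntraThread at hg
    obtain ⟨h1, h2, h3⟩ := hg
    refine Or.inl ⟨aux_piF_lt h1 hbk, ?_, ?_⟩
    · rw [aux_length_moveFront hklen]; exact aux_piF_lt_len h2 hklen
    · rw [aux_tidAt_moveFront hk, aux_tidAt_moveFront hk]; exact h3
  · unfold RelAcq at hg
    obtain ⟨l, h1, h2, h3, h4⟩ := hg
    have hak : a ≠ k := by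
      rintro rfl
      obtain ⟨t, ht, hrel⟩ := h2
      rw [hk] at ht
      cases ht
      simp [GStmt.isReleaseOn] at hrel
    refine Or.inr (Or.inl ⟨l, aux_piF_lt h1 hbk, (aux_stmtIs_moveFront hk _ _).mpr h2,
      (aux_stmtIs_moveFront hk _ _).mpr h3, ?_⟩)
    intro m' hm1 hm2 hacq
    obtain ⟨t, ht, hq⟩ := hacq
    by_cases hm0 : m' = 0
    · subst hm0; exact absurd hm1 (Nat.not_lt_zero _)
    obtain ⟨m'', rfl⟩ : ∃ q, m' = q+1 := ⟨m'-1, by omega⟩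
    rw [List.getElem?_cons_succ, List.getElem?_eraseIdx] at ht
    split_ifs at ht with hc
    · have hpa : a < m'' := by unfold piF at hm1; split_ifs at hm1 <;> omega
      have hpb : m'' < b := by unfold piF at hm2; split_ifs at hm2 <;> omega
      exact h4 m'' hpa hpb ⟨t, ht, hq⟩
    · have hpa : a < m''+1 := by unfold piF at hm1; split_ifs at hm1 <;> omega
      have hpb : m''+1 < b := by unfold piF at hm2; split_ifs at hm2 <;> omega
      exact h4 (m''+1) hpa hpb ⟨t, ht, hq⟩
  · exact absurd hg (aux_barrier_false hne _ _)

lemma aux_hb_moveFront {ts : List (GStmt P)} {k : ℕ} {i : Fin P.n} {mm : P.NStmt i}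
    (hk : ts[k]? = some ⟨i, Stmt.nsync mm⟩) (hne : NoExit ts)
    (hfirst : ∀ j, j < k → ∀ tj : GStmt P, ts[j]? = some tj → tj.1 ≠ i)
    {a b : ℕ} (hab : HB ts a b) (hbk : b ≠ k) :
    HB ((⟨i, Stmt.nsync mm⟩ : GStmt P) :: ts.eraseIdx k) (piF k a) (piF k b) := by
  have hnih := aux_no_hb_into hne hk hfirst
  suffices hkey : ∀ b, Relation.TransGen (Gen ts) a b → b ≠ k →
      Relation.TransGen (Gen ((⟨i, Stmt.nsync mm⟩ : GStmt P) :: ts.eraseIdx k))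
        (piF k a) (piF k b) from hkey b hab hbk
  intro b hb
  induction hb with
  | single h =>
    intro hbk
    exact Relation.TransGen.single (aux_gen_moveFront hk hne hbk h)
  | @tail m' b' h1 h2 ih =>
    intro hbk
    have hmk : m' ≠ k := fun he => hnih a (he ▸ h1)
    exact Relation.TransGen.tail (ih hmk) (aux_gen_moveFront hk hne hbk h2)

lemma aux_inv_moveFront {C : GStmt P → GStmt P → Prop} (hC : IsConflictRel P C)
    {ts : List (GStmt P)} {k : ℕ} {i : Fin P.n} {mm : P.NStmt i}
    (hk : ts[k]? = some ⟨i, Stmt.nsync mm⟩) (hne : NoExit ts)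
    (hfirst : ∀ j, j < k → ∀ tj : GStmt P, ts[j]? = some tj → tj.1 ≠ i)
    (hinv : Inv C ts) :
    Inv C ((⟨i, Stmt.nsync mm⟩ : GStmt P) :: ts.eraseIdx k) := by
  have hnih := aux_no_hb_into hne hk hfirst
  have hnc : ∀ j, j < k → ∀ tj : GStmt P, ts[j]? = some tj →
      ¬ C tj ⟨i, Stmt.nsync mm⟩ := fun j hj tj htj hc =>
    hnih j (hinv j k tj _ hj htj hk hc)
  intro j' k' tj tk' hjk hj hk'
  intro hcc
  have hk'0 : k' ≠ 0 := by omega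
  -- preimage of j'
  have keyj : ∀ (a : ℕ), piF k a = j' → ts[a]? = some tj := by
    intro a ha
    rw [← aux_getElem_moveFront hk a, ha]; exact hj
  have keyk : ∀ (b : ℕ), piF k b = k' → ts[b]? = some tk' := by
    intro b hb
    rw [← aux_getElem_moveFront hk b, hb]; exact hk'
  have final : ∀ (a b : ℕ), piF k a = j' → piF k b = k' → a < b → b ≠ k →
      HB ((⟨i, Stmt.nsync mm⟩ : GStmt P) :: ts.eraseIdx k) j' k' := by
    intro a b ha hb hab hbk
    have := aux_hb_moveFront hk hne hfirst
      (hinv a b tj tk' hab (keyj a ha) (keyk b hb) hcc) hbk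
    rwa [ha, hb] at this
  rcases Nat.lt_trichotomy j' 0 with h0 | h0 | h0
  · omega
  · -- j' = 0 : a = k
    subst h0
    have hja : ts[k]? = some tj := keyj k (by unfold piF; simp)
    rw [hk] at hja
    cases hja
    by_cases hkk : k' ≤ k
    · -- b = k' - 1 < k : contradiction with hnc
      have hb : piF k (k'-1) = k' := by unfold piF; split_ifs <;> omega
      exact absurd (hC.symm _ _ hcc) (hnc (k'-1) (by omega) tk' (keyk _ hb))
    · have hb : piF k k' = k' := by unfold piF; split_ifs <;> omega
      exact final k k' (by unfold piF; simp) hb (by omega) (by omega)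
  · -- j' ≥ 1
    by_cases hjk2 : j' ≤ k
    · have ha : piF k (j'-1) = j' := by unfold piF; split_ifs <;> omega
      by_cases hkk : k' ≤ k
      · have hb : piF k (k'-1) = k' := by unfold piF; split_ifs <;> omega
        exact final (j'-1) (k'-1) ha hb (by omega) (by omega)
      · have hb : piF k k' = k' := by unfold piF; split_ifs <;> omega
        exact final (j'-1) k' ha hb (by omega) (by omega)
    · have ha : piF k j' = j' := by unfold piF; split_ifs <;> omega
      have hb : piF k k' = k' := by unfold piF; split_ifs <;> omega
      exact final j' k' ha hb (by omega) (by omega)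

end Aux2


section Aux3

variable {P : Program}

open Classical in
/-- The recorded-set update along an edge labelled `t`. -/
noncomputable def stepHist (RS : RSets P) (u : RNode P) : (t : GStmt P) → Set (P.NStmt t.1)
  | ⟨i, Stmt.nsync m⟩ => insert m (u.hist i)
  | ⟨i, Stmt.acquire _⟩ => if u.st.loc i ∈ RS.R i then ∅ else u.hist i
  | ⟨i, Stmt.release _⟩ => if u.st.loc i ∈ RS.R i then ∅ else u.hist i
  | ⟨i, Stmt.exit⟩ => if u.st.loc i ∈ RS.R i then ∅ else u.hist i

lemma aux_redge_exists (RS : RSets P) (u : RNode P) (t : GStmt P)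
    (hen : Enabled u.st t) (hnex : t.2 ≠ Stmt.exit)
    (hmin : (∃ i, Normal RS u.st i) →
      Normal RS u.st t.1 ∧ ∀ j, Normal RS u.st j → t.1 ≤ j) :
    ∃ v : RNode P, REdge RS u t v ∧ v.st = execute u.st t := by
  classical
  refine ⟨⟨execute u.st t, Function.update u.hist t.1 (stepHist RS u t)⟩, ?_, rfl⟩
  obtain ⟨i, st⟩ := t
  have hnez : ¬ GStmt.isExitZero (⟨i, st⟩ : GStmt P) := fun hz => hnex hz.1
  have hst' : ∀ m0 : P.NStmt i, st = Stmt.nsync m0 → GStmt.isNsync (⟨i, st⟩ : GStmt P) :=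
    fun m0 hm => ⟨m0, hm⟩
  refine ⟨hen, rfl, ?_, ?_, ?_, hmin⟩
  · intro m hm
    simp only [] at hm
    cases st with
    | nsync m0 =>
      injection hm with h2
      subst h2
      simp [stepHist]
    | acquire l => simp at hm
    | release l => simp at hm
    | exit => simp at hm
  · intro hns
    have hstn : ∀ m0, st ≠ Stmt.nsync m0 := fun m0 hm => hns (hst' m0 hm)
    constructor
    · intro hcase
      rcases hcase with hz | hR
      · exact absurd hz hnez
      · cases st with
        | nsync m0 => exact absurd rfl (hstn m0)
        | acquire l => simp [stepHist, hR]
        | release l => simp [stepHist, hR]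
        | exit => simp [stepHist, hR]
    · intro hcase
      have hR : u.st.loc i ∉ RS.R i := fun hh => hcase (Or.inr hh)
      cases st with
      | nsync m0 => exact absurd rfl (hstn m0)
      | acquire l => simp [stepHist, hR]
      | release l => simp [stepHist, hR]
      | exit => simp [stepHist, hR]
  · intro j hj
    exact ⟨fun hz => absurd hz hnez, fun _ => Function.update_of_ne hj _ _⟩

lemma aux_normal_kind (hnb : NoBarriers P) (RS : RSets P) {s : GState P} {i : Fin P.n}
    (h : Normal RS s i) : P.kind i (s.loc i) = LKind.nsync := by
  obtain ⟨hR, st, hst⟩ := h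
  cases hkk : P.kind i (s.loc i) with
  | acquire l => exact absurd (RS.acq_mem i _ l hkk) hR
  | release l => exact absurd (RS.rel_mem i _ l hkk) hR
  | barrier => exact absurd hkk (hnb i _)
  | nsync => rfl
  | term => exact absurd hst (aux_enabled_term hkk)

lemma aux_first_shape {sf : GState P} {i : Fin P.n} :
    ∀ (k : ℕ) (ts : List (GStmt P)) (s : GState P) (tk : GStmt P),
      Exec s ts sf → P.kind i (s.loc i) = LKind.nsync →
      ts[k]? = some tk → tk.1 = i →
      (∀ j, j < k → ∀ tj : GStmt P, ts[j]? = some tj → tj.1 ≠ i) →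
      ∃ m, tk = ⟨i, Stmt.nsync m⟩ := by
  intro k
  induction k with
  | zero =>
    intro ts s tk hex hkind hk hti _
    cases ts with
    | nil => simp at hk
    | cons t0 l =>
      simp at hk
      subst hk
      obtain ⟨hen0, -⟩ := aux_exec_cons hex
      obtain ⟨i', st⟩ := t0
      have hii : i' = i := hti
      subst hii
      obtain ⟨m, hm, -⟩ := aux_enabled_shape_nsync hkind hen0
      exact ⟨m, by rw [hm]⟩
  | succ k ih =>
    intro ts s tk hex hkind hk hti hfirst
    cases ts with
    | nil => simp at hk
    | cons t0 l =>
      obtain ⟨hen0, hexl⟩ := aux_exec_cons hex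
      obtain ⟨j0, st0⟩ := t0
      have hj0 : j0 ≠ i := hfirst 0 (by omega) ⟨j0, st0⟩ (by simp)
      have hloc : (execute s ⟨j0, st0⟩).loc i = s.loc i :=
        aux_execute_loc_ne s j0 st0 i (Ne.symm hj0)
      exact ih l (execute s ⟨j0, st0⟩) tk hexl (by rw [hloc]; exact hkind)
        (by simpa using hk)
        hti (fun j hj tj htj => hfirst (j+1) (by omega) tj (by simpa using htj))

lemma aux_swap_front (hnb : NoBarriers P) {C : GStmt P → GStmt P → Prop}
    (hC : IsConflictRel P C) {i : Fin P.n} {sf : GState P} :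
    ∀ (k : ℕ) (ts : List (GStmt P)) (s : GState P) (tk : GStmt P),
      Exec s ts sf → P.kind i (s.loc i) = LKind.nsync →
      ts[k]? = some tk → tk.1 = i →
      (∀ j, j < k → ∀ tj : GStmt P, ts[j]? = some tj → tj.1 ≠ i) →
      (∀ j, j < k → ∀ tj : GStmt P, ts[j]? = some tj → ¬ C tj tk) →
      Exec s (tk :: ts.eraseIdx k) sf := by
  intro k
  induction k with
  | zero =>
    intro ts s tk hex hkind hk hti hfirst hnc
    cases ts with
    | nil => simp at hk
    | cons t0 l =>
      simp at hk
      subst hk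
      simpa using hex
  | succ k ih =>
    intro ts s tk hex hkind hk hti hfirst hnc
    cases ts with
    | nil => simp at hk
    | cons t0 l =>
      obtain ⟨hen0, hexl⟩ := aux_exec_cons hex
      obtain ⟨j0, st0⟩ := t0
      have hj0 : j0 ≠ i := hfirst 0 (by omega) ⟨j0, st0⟩ (by simp)
      have hloc : (execute s ⟨j0, st0⟩).loc i = s.loc i :=
        aux_execute_loc_ne s j0 st0 i (Ne.symm hj0)
      have hkind' : P.kind i ((execute s ⟨j0, st0⟩).loc i) = LKind.nsync := by
        rw [hloc]; exact hkind
      have hrec := ih l (execute s ⟨j0, st0⟩) tk hexl hkind' (by simpa using hk) hti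
        (fun j hj tj htj => hfirst (j+1) (by omega) tj (by simpa using htj))
        (fun j hj tj htj => hnc (j+1) (by omega) tj (by simpa using htj))
      obtain ⟨henk, hexk⟩ := aux_exec_cons hrec
      obtain ⟨i', stk⟩ := tk
      have hii : i = i' := hti.symm
      subst hii
      obtain ⟨m, hm, hmem⟩ := aux_enabled_shape_nsync hkind' henk
      subst hm
      have hen1 : Enabled s ⟨i, Stmt.nsync m⟩ := by
        rw [aux_enabled_nsync_iff]
        exact ⟨hkind, by rwa [hloc] at hmem⟩
      have hen0' : Enabled (execute s ⟨i, Stmt.nsync m⟩) ⟨j0, st0⟩ :=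
        aux_enabled_congr (aux_execute_loc_ne s i _ j0 hj0) (aux_execute_lk_nsync s i m)
          (aux_execute_wait hnb s _) hen0
      have hcomm : execute (execute s ⟨i, Stmt.nsync m⟩) ⟨j0, st0⟩
          = execute (execute s ⟨j0, st0⟩) ⟨i, Stmt.nsync m⟩ := by
        by_cases hcase : ∃ m0, st0 = Stmt.nsync m0
        · obtain ⟨m0, rfl⟩ := hcase
          exact (hC.commute ⟨j0, Stmt.nsync m0⟩ ⟨i, Stmt.nsync m⟩ ⟨m0, rfl⟩ ⟨m, rfl⟩ hj0
            (hnc 0 (by omega) ⟨j0, Stmt.nsync m0⟩ (by simp)) s hen0 hen1).symm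
        · exact (aux_commute hnb hj0 m st0 (fun m0 hh => hcase ⟨m0, hh⟩)).symm
      have herase : (⟨j0, st0⟩ :: l).eraseIdx (k+1)
          = (⟨j0, st0⟩ : GStmt P) :: l.eraseIdx k := rfl
      rw [herase]
      refine Exec.cons hen1 rfl (Exec.cons hen0' rfl ?_)
      rw [hcomm]
      exact hexk

lemma aux_main (hnb : NoBarriers P) (RS : RSets P) {C : GStmt P → GStmt P → Prop}
    (hC : IsConflictRel P C) (sf : GState P) (hsf : ∀ t, ¬ Enabled sf t) :
    ∀ (n : ℕ) (ts : List (GStmt P)) (u : RNode P), ts.length ≤ n →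
      Exec u.st ts sf → Inv C ts →
      ∃ l v, RPath RS u l v ∧ v.st = sf := by
  intro n
  induction n with
  | zero =>
    intro ts u hlen hexec hinv
    have hts : ts = [] := List.eq_nil_of_length_eq_zero (by omega)
    subst hts
    exact ⟨[], u, RPath.nil u, aux_exec_nil hexec⟩
  | succ n ih =>
    intro ts u hlen hexec hinv
    classical
    rcases eq_or_ne ts [] with rfl | hts
    · exact ⟨[], u, RPath.nil u, aux_exec_nil hexec⟩
    have hne : NoExit ts := aux_noExit_of_exec hnb hexec
    have htslen : 1 ≤ ts.length := List.length_pos_iff.mpr hts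
    by_cases hnormal : ∃ j, Normal RS u.st j
    · -- some thread is normal; take the least one
      obtain ⟨i0, hi0⟩ := hnormal
      set S : Finset (Fin P.n) := Finset.univ.filter (fun j => Normal RS u.st j) with hSdef
      have hS : S.Nonempty := ⟨i0, by simp [hSdef, hi0]⟩
      set i := S.min' hS with hidef
      have hNi : Normal RS u.st i := by
        have := S.min'_mem hS
        simpa [hSdef] using this
      have hminI : ∀ j, Normal RS u.st j → i ≤ j :=
        fun j hj => S.min'_le j (by simp [hSdef, hj])
      have hkind : P.kind i (u.st.loc i) = LKind.nsync := aux_normal_kind hnb RS hNi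
      -- thread i occurs in ts
      have hQ : ∃ kk : ℕ, ∃ t : GStmt P, ts[kk]? = some t ∧ t.1 = i := by
        by_contra hno
        push_neg at hno
        have hloc : sf.loc i = u.st.loc i :=
          aux_loc_const_of_exec hexec (fun kk t hkk => hno kk t hkk)
        obtain ⟨hR, st, hst⟩ := hNi
        obtain ⟨m, hm, hmem⟩ := aux_enabled_shape_nsync hkind hst
        have : Enabled sf ⟨i, Stmt.nsync m⟩ := by
          rw [aux_enabled_nsync_iff, hloc]
          exact ⟨hkind, hmem⟩
        exact hsf _ this
      set k := Nat.find hQ with hkdef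
      obtain ⟨tk, hk, hti⟩ := Nat.find_spec hQ
      have hfirst : ∀ j, j < k → ∀ tj : GStmt P, ts[j]? = some tj → tj.1 ≠ i := by
        intro j hj tj htj hji
        exact Nat.find_min hQ hj ⟨tj, htj, hji⟩
      obtain ⟨mm, rfl⟩ := aux_first_shape k ts u.st tk hexec hkind hk hti hfirst
      have hnc : ∀ j, j < k → ∀ tj : GStmt P, ts[j]? = some tj →
          ¬ C tj ⟨i, Stmt.nsync mm⟩ := fun j hj tj htj hcc =>
        aux_no_hb_into hne hk hfirst j (hinv j k tj _ hj htj hk hcc)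
      have hswap : Exec u.st ((⟨i, Stmt.nsync mm⟩ : GStmt P) :: ts.eraseIdx k) sf :=
        aux_swap_front hnb hC k ts u.st _ hexec hkind hk rfl hfirst hnc
      obtain ⟨henk, hexk⟩ := aux_exec_cons hswap
      have hinv' : Inv C (ts.eraseIdx k) :=
        aux_inv_tail (aux_noExit_of_exec hnb hswap) (aux_inv_moveFront hC hk hne hfirst hinv)
      obtain ⟨v, hedge, hvst⟩ := aux_redge_exists RS u ⟨i, Stmt.nsync mm⟩ henk (by simp)
        (fun _ => ⟨hNi, hminI⟩)
      have hklen : k < ts.length := aux_getElem_lt hk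
      have hlen' : (ts.eraseIdx k).length ≤ n := by
        rw [List.length_eraseIdx_of_lt hklen]
        omega
      obtain ⟨l', v', hp, hstf⟩ := ih (ts.eraseIdx k) v hlen'
        (by rw [hvst]; exact hexk) hinv'
      exact ⟨_ :: l', v', RPath.cons hedge hp, hstf⟩
    · -- no thread is normal: take the first statement of ts
      cases ts with
      | nil => exact absurd rfl hts
      | cons t0 l =>
        obtain ⟨hen0, hexl⟩ := aux_exec_cons hexec
        have hnex : t0.2 ≠ Stmt.exit := hne 0 t0 (by simp)
        obtain ⟨v, hedge, hvst⟩ := aux_redge_exists RS u t0 hen0 hnex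
          (fun hh => absurd hh hnormal)
        have hinv' := aux_inv_tail hne hinv
        obtain ⟨l', v', hp, hstf⟩ := ih l v (by simp at hlen; omega)
          (by rw [hvst]; exact hexl) hinv'
        exact ⟨t0 :: l', v', RPath.cons hedge hp, hstf⟩

end Aux3

/-- Race detection theorem (barrier-free case), part 2: every final state
reachable by a race-free execution is reachable in the race-detecting state graph. -/
theorem stmt17 (P : Program) (hnb : NoBarriers P) (RS : RSets P)
    (C : GStmt P → GStmt P → Prop) (hC : IsConflictRel P C)
    (s0 sf : GState P)
    (hfin : {v | RReach RS (initNode s0) v}.Finite)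
    (h : ∃ ts, Exec s0 ts sf ∧ ¬ HasRace C ts ∧ ∀ t, ¬ Enabled sf t) :
    ∃ l v, RPath RS (initNode s0) l v ∧ v.st = sf := by
  obtain ⟨ts, hexec, hnr, hsf⟩ := h
  have hne : NoExit ts := aux_noExit_of_exec hnb hexec
  exact aux_main hnb RS hC sf hsf ts.length ts (initNode s0) le_rfl hexec
    (aux_inv_of_noRace hne hnr)

end MC
end
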